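/- arXiv:2004.04772 — 9 statements merged into one kernel-verified Lean document; each statement's English description precedes it below -/
import Mathlib

section
/- Let w : Fin n → ℝ be a frequency vector with w_1 ≥ w_2 ≥ ... ≥ w_n > 0, let q > 0 and φ ∈ (0,1], and suppose w_1^q ≥ φ · Σ_j w_j^q (w has an ℓ_q φ-heavy hitter). Let f(t) = Σ_{j=1}^m a_j t^{p_j} where a_j ≥ 0, not all a_j are zero, and p_j ≥ q for all j. Then for all i, f(w_i) / (Σ_{k=1}^n f(w_k)) ≤ (1/φ) · w_i^q / (Σ_{k=1}^n w_k^q). That is, ℓ_q sampling emulates pps sampling for every nonnegative linear combination of moment functions t^p with p ≥ q, with overhead at most 1/φ. -/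
/-!
Write `f(t) = ∑ⱼ aⱼ t^{pⱼ}`. Since every `pⱼ ≥ q`, the ratio `f(t) / t^q` is nondecreasing in `t`,
so `f(wᵢ) / f(w₀) ≤ wᵢ^q / w₀^q`. Bounding `∑ₖ f(wₖ)` below by `f(w₀)` and `w₀^q` below by
`φ ∑ₖ wₖ^q` gives the claim.
-/

open Finset

theorem Real.rpow_mul_rpow_le_rpow_mul_rpow {x y p q : ℝ} (hx : 0 < x) (hxy : x ≤ y)
    (hqp : q ≤ p) : x ^ p * y ^ q ≤ x ^ q * y ^ p := by
  have hy : 0 < y := hx.trans_le hxy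
  have hpq : x ^ (p - q) ≤ y ^ (p - q) := Real.rpow_le_rpow hx.le hxy (sub_nonneg.mpr hqp)
  calc x ^ p * y ^ q = x ^ (p - q) * (x ^ q * y ^ q) := by
        rw [← mul_assoc, ← Real.rpow_add hx, sub_add_cancel]
    _ ≤ y ^ (p - q) * (x ^ q * y ^ q) := by gcongr
    _ = x ^ q * y ^ p := by
        rw [mul_left_comm, mul_comm (y ^ (p - q)), ← Real.rpow_add hy, add_sub_cancel]

theorem Real.sum_mul_rpow_mul_rpow_le {ι : Type*} (s : Finset ι) (a p : ι → ℝ) {x y q : ℝ}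
    (ha : ∀ j ∈ s, 0 ≤ a j) (hp : ∀ j ∈ s, q ≤ p j) (hx : 0 < x) (hxy : x ≤ y) :
    (∑ j ∈ s, a j * x ^ p j) * y ^ q ≤ x ^ q * ∑ j ∈ s, a j * y ^ p j := by
  rw [sum_mul, mul_sum]
  refine sum_le_sum fun j hj => ?_
  calc a j * x ^ p j * y ^ q = a j * (x ^ p j * y ^ q) := by ring
    _ ≤ a j * (x ^ q * y ^ p j) :=
        mul_le_mul_of_nonneg_left (Real.rpow_mul_rpow_le_rpow_mul_rpow hx hxy (hp j hj)) (ha j hj)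
    _ = x ^ q * (a j * y ^ p j) := by ring

theorem div_sum_le_div_of_mul_le_mul {ι : Type*} [Fintype ι] {F G : ι → ℝ} {i₀ i : ι}
    (hF : ∀ k, 0 ≤ F k) (hG₀ : 0 < G i₀) (hG : 0 ≤ G i)
    (hdom : F i * G i₀ ≤ G i * F i₀) :
    F i / ∑ k, F k ≤ G i / G i₀ := by
  rcases (sum_nonneg fun k _ => hF k).eq_or_lt with hsum | hsum
  · rw [← hsum, div_zero]
    exact div_nonneg hG hG₀.le
  · rw [div_le_div_iff₀ hsum hG₀]
    calc F i * G i₀ ≤ G i * F i₀ := hdom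
      _ ≤ G i * ∑ k, F k :=
          mul_le_mul_of_nonneg_left (single_le_sum (fun k _ => hF k) (mem_univ i₀)) hG

theorem div_le_one_div_mul_div_of_le_mul {x y S φ : ℝ} (hx : 0 ≤ x) (hφ : 0 < φ) (hS : 0 < S)
    (hy : φ * S ≤ y) : x / y ≤ 1 / φ * (x / S) := by
  calc x / y ≤ x / (φ * S) := div_le_div_of_nonneg_left hx (mul_pos hφ hS) hy
    _ = 1 / φ * (x / S) := by field_simp

theorem stmt_5_general {n m : ℕ} (hn : 0 < n) (w : Fin n → ℝ)
    (hpos : ∀ i, 0 < w i) (hmono : ∀ i j : Fin n, i ≤ j → w j ≤ w i)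
    (q φ : ℝ) (hφ0 : 0 < φ)
    (hHH : w ⟨0, hn⟩ ^ q ≥ φ * ∑ j, w j ^ q)
    (a : Fin m → ℝ) (ha : ∀ j, 0 ≤ a j)
    (p : Fin m → ℝ) (hp : ∀ j, q ≤ p j) :
    ∀ i : Fin n,
      (∑ j, a j * w i ^ p j) / (∑ k, ∑ j, a j * w k ^ p j)
        ≤ (1 / φ) * (w i ^ q / ∑ k, w k ^ q) := by
  intro i
  have hf : ∀ k, 0 ≤ ∑ j, a j * w k ^ p j := fun k =>
    sum_nonneg fun j _ => mul_nonneg (ha j) (Real.rpow_nonneg (hpos k).le _)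
  calc (∑ j, a j * w i ^ p j) / (∑ k, ∑ j, a j * w k ^ p j)
      ≤ w i ^ q / w ⟨0, hn⟩ ^ q :=
        div_sum_le_div_of_mul_le_mul (G := fun k => w k ^ q) hf (Real.rpow_pos_of_pos (hpos _) q)
          (Real.rpow_nonneg (hpos i).le q) <|
          Real.sum_mul_rpow_mul_rpow_le _ a p (fun j _ => ha j) (fun j _ => hp j) (hpos i)
            (hmono _ i (Nat.zero_le i.val))
    _ ≤ 1 / φ * (w i ^ q / ∑ k, w k ^ q) :=
        div_le_one_div_mul_div_of_le_mul (Real.rpow_nonneg (hpos i).le q) hφ0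
          (sum_pos (fun k _ => Real.rpow_pos_of_pos (hpos k) q) ⟨_, mem_univ i⟩) hHH

/-- with an ℓ_q φ-heavy hitter (the most frequent key), ℓ_q sampling
emulates pps sampling for every nonnegative linear combination of moment functions
`t^p` with `p ≥ q`, with overhead at most `1/φ`. -/
theorem stmt_5 {n m : ℕ} (hn : 0 < n) (w : Fin n → ℝ)
    (hpos : ∀ i, 0 < w i) (hmono : ∀ i j : Fin n, i ≤ j → w j ≤ w i)
    (q φ : ℝ) (hq : 0 < q) (hφ0 : 0 < φ) (hφ1 : φ ≤ 1)
    (hHH : w ⟨0, hn⟩ ^ q ≥ φ * ∑ j, w j ^ q)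
    (a : Fin m → ℝ) (ha : ∀ j, 0 ≤ a j) (hane : ∃ j, a j ≠ 0)
    (p : Fin m → ℝ) (hp : ∀ j, q ≤ p j) :
    ∀ i : Fin n,
      (∑ j, a j * w i ^ p j) / (∑ k, ∑ j, a j * w k ^ p j)
        ≤ (1 / φ) * (w i ^ q / ∑ k, w k ^ q) :=
  stmt_5_general hn w hpos hmono q φ hφ0 hHH a ha p hp
end

section
/- Let w : Fin n → ℝ be a frequency vector with w_1 ≥ w_2 ≥ ... ≥ w_n > 0 satisfying w_i/w_1 ≤ c·i^{−α} for all i (subZipf[α,c,n]) with c > 0 and α ≥ 1. Then for every p ≥ 2, the overhead of emulating ℓ_p sampling by ℓ_2 sampling satisfies max_{1≤i≤n} [(w_i^p / Σ_j w_j^p) / (w_i^2 / Σ_j w_j^2)] ≤ 1.65 · c². -/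
/-!
Sampling by `w_i ^ 2` instead of `w_i ^ p` loses at most a factor `Σ_j (w_j / w_max) ^ 2` on any
coordinate, because raising `w_i / w_max ≤ 1` to the larger power `p` only shrinks it. For sub-Zipf
frequencies with `α ≥ 1` that sum is at most `c² ζ(2α) ≤ c² π² / 6 < 1.65 c²`.
-/

open Finset

noncomputable def ppsProb {ι : Type*} [Fintype ι] (w : ι → ℝ) (p : ℝ) (i : ι) : ℝ :=
  w i ^ p / ∑ j, w j ^ p

theorem ppsProb_div_ppsProb_le {ι : Type*} [Fintype ι] {w : ι → ℝ} (hw : ∀ i, 0 < w i)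
    {k : ι} (hk : ∀ j, w j ≤ w k) {p q : ℝ} (hqp : q ≤ p) (i : ι) :
    ppsProb w p i / ppsProb w q i ≤ ∑ j, (w j / w k) ^ q := by
  have hwk := hw k
  have hmax_le_sum : w k ^ p ≤ ∑ j, w j ^ p :=
    single_le_sum (fun j _ => (Real.rpow_pos_of_pos (hw j) p).le) (mem_univ k)
  have hdiv : w i ^ p / ∑ j, w j ^ p ≤ w i ^ q / w k ^ q :=
    calc w i ^ p / ∑ j, w j ^ p ≤ w i ^ p / w k ^ p :=
          div_le_div_of_nonneg_left (Real.rpow_pos_of_pos (hw i) p).le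
            (Real.rpow_pos_of_pos hwk p) hmax_le_sum
      _ = (w i / w k) ^ p := (Real.div_rpow (hw i).le hwk.le p).symm
      _ ≤ (w i / w k) ^ q :=
          Real.rpow_le_rpow_of_exponent_ge (div_pos (hw i) hwk)
            (div_le_one_of_le₀ (hk i) hwk.le) hqp
      _ = w i ^ q / w k ^ q := Real.div_rpow (hw i).le hwk.le q
  have hwiq := Real.rpow_pos_of_pos (hw i) q
  calc ppsProb w p i / ppsProb w q i
      ≤ (w i ^ q / w k ^ q) / (w i ^ q / ∑ j, w j ^ q) :=
        div_le_div_of_nonneg_right hdiv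
          (div_nonneg hwiq.le (sum_nonneg fun j _ => (Real.rpow_pos_of_pos (hw j) q).le))
    _ = (∑ j, w j ^ q) / w k ^ q := by field_simp
    _ = ∑ j, (w j / w k) ^ q := by
        rw [sum_div]
        exact sum_congr rfl fun j _ => (Real.div_rpow (hw j).le hwk.le q).symm

theorem sum_range_one_div_succ_sq_le (n : ℕ) :
    ∑ i ∈ range n, 1 / ((i : ℝ) + 1) ^ 2 ≤ 1.65 := by
  have hpartial : ∑ i ∈ range n, 1 / ((i : ℝ) + 1) ^ 2 ≤ Real.pi ^ 2 / 6 := by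
    have h := sum_le_hasSum (range (n + 1)) (fun i _ => by positivity) hasSum_zeta_two
    simpa [sum_range_succ'] using h
  nlinarith [Real.pi_lt_d6, Real.pi_pos]

theorem sum_range_succ_rpow_neg_le {β : ℝ} (hβ : 2 ≤ β) (n : ℕ) :
    ∑ i ∈ range n, ((i : ℝ) + 1) ^ (-β) ≤ 1.65 := by
  refine le_trans (sum_le_sum fun i _ => ?_) (sum_range_one_div_succ_sq_le n)
  have hi : (1 : ℝ) ≤ i + 1 := by linarith [(Nat.cast_nonneg i : (0 : ℝ) ≤ i)]
  calc ((i : ℝ) + 1) ^ (-β) ≤ ((i : ℝ) + 1) ^ (-2 : ℝ) :=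
        Real.rpow_le_rpow_of_exponent_le hi (by linarith)
    _ = 1 / ((i : ℝ) + 1) ^ 2 := by
        rw [Real.rpow_neg (by positivity), one_div, Real.rpow_two]

theorem sum_div_first_rpow_two_le_of_subZipf {n : ℕ} (hn : 0 < n) {w : Fin n → ℝ}
    (hpos : ∀ i, 0 < w i) {c α : ℝ} (hα : 1 ≤ α)
    (hsub : ∀ i : Fin n, w i / w ⟨0, hn⟩ ≤ c * ((i : ℝ) + 1) ^ (-α)) :
    ∑ j, (w j / w ⟨0, hn⟩) ^ (2 : ℝ) ≤ 1.65 * c ^ 2 := by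
  have hterm : ∀ j : Fin n,
      (w j / w ⟨0, hn⟩) ^ (2 : ℝ) ≤ c ^ 2 * ((j : ℝ) + 1) ^ (-(2 * α)) := by
    intro j
    have hratio := div_pos (hpos j) (hpos ⟨0, hn⟩)
    calc (w j / w ⟨0, hn⟩) ^ (2 : ℝ) = (w j / w ⟨0, hn⟩) ^ 2 := Real.rpow_two _
      _ ≤ (c * ((j : ℝ) + 1) ^ (-α)) ^ 2 := pow_le_pow_left₀ hratio.le (hsub j) 2
      _ = c ^ 2 * ((j : ℝ) + 1) ^ (-(2 * α)) := by
        rw [mul_pow, ← Real.rpow_natCast (_ ^ (-α)), ← Real.rpow_mul (by positivity)]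
        ring_nf
  calc ∑ j, (w j / w ⟨0, hn⟩) ^ (2 : ℝ)
      ≤ ∑ j : Fin n, c ^ 2 * ((j : ℝ) + 1) ^ (-(2 * α)) := sum_le_sum fun j _ => hterm j
    _ = c ^ 2 * ∑ i ∈ range n, ((i : ℝ) + 1) ^ (-(2 * α)) := by
        rw [← mul_sum, Fin.sum_univ_eq_sum_range (fun i => ((i : ℝ) + 1) ^ (-(2 * α)))]
    _ ≤ c ^ 2 * 1.65 := by
        gcongr
        exact sum_range_succ_rpow_neg_le (by linarith) n
    _ = 1.65 * c ^ 2 := mul_comm _ _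

theorem stmt_7_general {n : ℕ} (hn : 0 < n) (w : Fin n → ℝ)
    (hpos : ∀ i, 0 < w i)
    (c α : ℝ) (hα : 1 ≤ α)
    (hsub : ∀ i : Fin n, w i / w ⟨0, hn⟩ ≤ c * ((i : ℝ) + 1) ^ (-α)) :
    ∀ p : ℝ, 2 ≤ p →
      (univ.sup' ⟨⟨0, hn⟩, mem_univ _⟩ fun i : Fin n =>
          (w i ^ p / ∑ j, w j ^ p) / (w i ^ (2 : ℝ) / ∑ j, w j ^ (2 : ℝ)))
        ≤ 1.65 * c ^ 2 := by
  intro p hp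
  obtain ⟨k, -, hk⟩ := exists_max_image univ w ⟨⟨0, hn⟩, mem_univ _⟩
  have hfirst_le_max : w ⟨0, hn⟩ ≤ w k := hk _ (mem_univ _)
  refine sup'_le _ _ fun i _ => ?_
  calc ppsProb w p i / ppsProb w 2 i
      ≤ ∑ j, (w j / w k) ^ (2 : ℝ) :=
        ppsProb_div_ppsProb_le hpos (fun j => hk j (mem_univ j)) hp i
    _ ≤ ∑ j, (w j / w ⟨0, hn⟩) ^ (2 : ℝ) := sum_le_sum fun j _ =>
        Real.rpow_le_rpow (div_pos (hpos j) (hpos k)).le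
          (div_le_div_of_nonneg_left (hpos j).le (hpos _) hfirst_le_max) zero_le_two
    _ ≤ 1.65 * c ^ 2 := sum_div_first_rpow_two_le_of_subZipf hn hpos hα hsub

/-- for subZipf[α,c,n] frequencies with α ≥ 1, the overhead of emulating
ℓ_p sampling (p ≥ 2) by ℓ_2 sampling is at most `1.65 · c²`. -/
theorem stmt_7 {n : ℕ} (hn : 0 < n) (w : Fin n → ℝ)
    (hpos : ∀ i, 0 < w i) (hmono : ∀ i j : Fin n, i ≤ j → w j ≤ w i)
    (c α : ℝ) (hc : 0 < c) (hα : 1 ≤ α)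
    (hsub : ∀ i : Fin n, w i / w ⟨0, hn⟩ ≤ c * ((i : ℝ) + 1) ^ (-α)) :
    ∀ p : ℝ, 2 ≤ p →
      (univ.sup' ⟨⟨0, hn⟩, mem_univ _⟩ fun i : Fin n =>
          (w i ^ p / ∑ j, w j ^ p) / (w i ^ (2 : ℝ) / ∑ j, w j ^ (2 : ℝ)))
        ≤ 1.65 * c ^ 2 :=
  stmt_7_general hn w hpos c α hα hsub
end

section
/- Let w : Fin n → ℝ be a frequency vector with w_1 ≥ w_2 ≥ ... ≥ w_n > 0 satisfying w_i/w_1 ≤ c·i^{−α} for all i (subZipf[α,c,n]) with c > 0 and α ≥ 1. Then for every p ≥ 1, the overhead of emulating ℓ_p sampling by ℓ_1 sampling satisfies max_{1≤i≤n} [(w_i^p / Σ_j w_j^p) / (w_i / Σ_j w_j)] ≤ (1 + ln n) · c. -/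
/-!
Since `w` is largest at index `0` and `p ≥ 1`, `w i ^ p / ∑ j, w j ^ p ≤ (w i / w 0) ^ p ≤ w i / w 0`,
so every overhead ratio is at most `∑ j, w j / w 0`. For `α ≥ 1` the subZipf bound dominates this
sum by `c` times the harmonic number `H_n ≤ 1 + ln n`.
-/

open Finset

section Emulation

variable {ι : Type*} [Fintype ι] {w : ι → ℝ} {k : ι} {p : ℝ}

theorem rpow_div_sum_rpow_le_div_of_forall_le (hpos : ∀ j, 0 < w j) (hmax : ∀ j, w j ≤ w k)
    (hp : 1 ≤ p) (i : ι) : w i ^ p / ∑ j, w j ^ p ≤ w i / w k := by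
  have hk := hpos k
  calc w i ^ p / ∑ j, w j ^ p
      ≤ w i ^ p / w k ^ p := by
        gcongr
        · exact (Real.rpow_pos_of_pos (hpos i) p).le
        · exact single_le_sum (fun j _ => (Real.rpow_pos_of_pos (hpos j) p).le) (mem_univ k)
    _ = (w i / w k) ^ p := (Real.div_rpow (hpos i).le hk.le p).symm
    _ ≤ (w i / w k) ^ (1 : ℝ) :=
        Real.rpow_le_rpow_of_exponent_ge (div_pos (hpos i) hk)
          ((div_le_one hk).2 (hmax i)) hp
    _ = w i / w k := Real.rpow_one _

theorem lpProb_div_l1Prob_le_sum_div_of_forall_le (hpos : ∀ j, 0 < w j)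
    (hmax : ∀ j, w j ≤ w k) (hp : 1 ≤ p) (i : ι) :
    (w i ^ p / ∑ j, w j ^ p) / (w i / ∑ j, w j) ≤ (∑ j, w j) / w k := by
  have hS : 0 < ∑ j, w j := sum_pos (fun j _ => hpos j) ⟨k, mem_univ k⟩
  calc (w i ^ p / ∑ j, w j ^ p) / (w i / ∑ j, w j)
      ≤ (w i / w k) / (w i / ∑ j, w j) :=
        div_le_div_of_nonneg_right (rpow_div_sum_rpow_le_div_of_forall_le hpos hmax hp i)
          (div_pos (hpos i) hS).le
    _ = (∑ j, w j) / w k := by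
        field_simp [(hpos i).ne', (hpos k).ne', hS.ne']

end Emulation

theorem sum_add_one_rpow_neg_le_harmonic {α : ℝ} (hα : 1 ≤ α) (n : ℕ) :
    ∑ i : Fin n, ((i : ℝ) + 1) ^ (-α) ≤ harmonic n := by
  rw [Fin.sum_univ_eq_sum_range (fun i => ((i : ℝ) + 1) ^ (-α)), harmonic]
  push_cast
  refine sum_le_sum fun i _ => ?_
  calc ((i : ℝ) + 1) ^ (-α) ≤ ((i : ℝ) + 1) ^ (-1 : ℝ) :=
        Real.rpow_le_rpow_of_exponent_le (by linarith [i.cast_nonneg (α := ℝ)]) (by linarith)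
    _ = ((i : ℝ) + 1)⁻¹ := Real.rpow_neg_one _

theorem sum_div_le_mul_one_add_log_of_subZipf {n : ℕ} {w : Fin n → ℝ} {W c α : ℝ}
    (hc : 0 ≤ c) (hα : 1 ≤ α) (hsub : ∀ i : Fin n, w i / W ≤ c * ((i : ℝ) + 1) ^ (-α)) :
    ∑ i, w i / W ≤ c * (1 + Real.log n) :=
  calc ∑ i, w i / W ≤ ∑ i : Fin n, c * ((i : ℝ) + 1) ^ (-α) := sum_le_sum fun i _ => hsub i
    _ = c * ∑ i : Fin n, ((i : ℝ) + 1) ^ (-α) := (mul_sum ..).symm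
    _ ≤ c * harmonic n := by gcongr; exact sum_add_one_rpow_neg_le_harmonic hα n
    _ ≤ c * (1 + Real.log n) := by gcongr; exact harmonic_le_one_add_log n

/-- for subZipf[α,c,n] frequencies with α ≥ 1, the overhead of emulating
ℓ_p sampling (p ≥ 1) by ℓ_1 sampling is at most `(1 + ln n) · c`. -/
theorem stmt_8 {n : ℕ} (hn : 0 < n) (w : Fin n → ℝ)
    (hpos : ∀ i, 0 < w i) (hmono : ∀ i j : Fin n, i ≤ j → w j ≤ w i)
    (c α : ℝ) (hc : 0 < c) (hα : 1 ≤ α)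
    (hsub : ∀ i : Fin n, w i / w ⟨0, hn⟩ ≤ c * ((i : ℝ) + 1) ^ (-α)) :
    ∀ p : ℝ, 1 ≤ p →
      (univ.sup' ⟨⟨0, hn⟩, mem_univ _⟩ fun i : Fin n =>
          (w i ^ p / ∑ j, w j ^ p) / (w i / ∑ j, w j))
        ≤ (1 + Real.log n) * c := by
  intro p hp
  have hmax : ∀ j, w j ≤ w ⟨0, hn⟩ := fun j => hmono _ j (Nat.zero_le _)
  refine sup'_le _ _ fun i _ => ?_
  calc (w i ^ p / ∑ j, w j ^ p) / (w i / ∑ j, w j)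
      ≤ (∑ j, w j) / w ⟨0, hn⟩ := lpProb_div_l1Prob_le_sum_div_of_forall_le hpos hmax hp i
    _ = ∑ j, w j / w ⟨0, hn⟩ := sum_div ..
    _ ≤ c * (1 + Real.log n) := sum_div_le_mul_one_add_log_of_subZipf hc.le hα hsub
    _ = (1 + Real.log n) * c := mul_comm ..
end

section
/- Let w : Fin n → ℝ be a frequency vector with w_1 ≥ w_2 ≥ ... ≥ w_n > 0, and define the probabilities q_i = 1/(i · H_n) for i ∈ {1,...,n}, where H_n = Σ_{i=1}^n 1/i. Then for every monotone nondecreasing nonnegative function f : ℝ → ℝ with Σ_{j=1}^n f(w_j) > 0 and every i: f(w_i) / (Σ_{j=1}^n f(w_j)) ≤ 1/i = H_n · q_i. Hence weighted sampling by q is a universal emulator with overhead at most H_n: for every such f, the pps probabilities p_i = f(w_i)/Σ_j f(w_j) satisfy p_i/q_i ≤ H_n. -/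
/-! If `g` is nonnegative and antitone, each of the `i` terms `g 1, …, g i` is at least `g i`,
so `i · g i ≤ ∑ g` and the `i`-th pps probability is at most `1 / i`. Dividing by
`q_i = 1 / (i · H_n)` then costs at most the factor `H_n`. -/

open Finset

theorem Antitone.card_Iic_nsmul_le_sum {α M : Type*} [Fintype α] [Preorder α]
    [LocallyFiniteOrderBot α] [AddCommMonoid M] [PartialOrder M] [IsOrderedAddMonoid M]
    {g : α → M} (hg : Antitone g) (hg0 : 0 ≤ g) (i : α) :
    #(Iic i) • g i ≤ ∑ j, g j :=
  calc #(Iic i) • g i = ∑ _j ∈ Iic i, g i := (sum_const _).symm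
    _ ≤ ∑ j ∈ Iic i, g j := sum_le_sum fun _ hj => hg (mem_Iic.mp hj)
    _ ≤ ∑ j, g j := sum_le_sum_of_subset_of_nonneg (subset_univ _) fun j _ _ => hg0 j

theorem Antitone.div_sum_le_one_div_succ {n : ℕ} {g : Fin n → ℝ} (hg : Antitone g)
    (hg0 : 0 ≤ g) (i : Fin n) :
    g i / ∑ j, g j ≤ 1 / ((i : ℝ) + 1) := by
  have hle : ((i : ℝ) + 1) * g i ≤ ∑ j, g j := by
    simpa [Fin.card_Iic, nsmul_eq_mul] using hg.card_Iic_nsmul_le_sum hg0 i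
  rcases (sum_nonneg fun j _ => hg0 j).eq_or_lt with hzero | hpos
  · rw [← hzero, div_zero]
    positivity
  · rw [div_le_div_iff₀ hpos (by positivity)]
    linarith

theorem div_one_div_mul_le_of_le_one_div {p r H : ℝ} (hr : 0 < r) (hH : 0 < H)
    (hp : p ≤ 1 / r) :
    p / (1 / (r * H)) ≤ H := by
  rw [div_le_iff₀ (by positivity)]
  calc p ≤ 1 / r := hp
    _ = H * (1 / (r * H)) := by field_simp

theorem stmt_10_general {n : ℕ} (w : Fin n → ℝ)
    (hmono : ∀ i j : Fin n, i ≤ j → w j ≤ w i)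
    (f : ℝ → ℝ) (hf : Monotone f) (hf0 : ∀ t, 0 ≤ f t) :
    ∀ i : Fin n,
      f (w i) / (∑ j, f (w j)) ≤ 1 / ((i : ℝ) + 1) ∧
      1 / ((i : ℝ) + 1) =
        (∑ j : Fin n, 1 / ((j : ℝ) + 1)) *
          (1 / (((i : ℝ) + 1) * ∑ j : Fin n, 1 / ((j : ℝ) + 1))) ∧
      (f (w i) / (∑ j, f (w j))) /
          (1 / (((i : ℝ) + 1) * ∑ j : Fin n, 1 / ((j : ℝ) + 1)))
        ≤ ∑ j : Fin n, 1 / ((j : ℝ) + 1) := by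
  intro i
  have hp := (hf.comp_antitone fun i j h => hmono i j h).div_sum_le_one_div_succ
    (fun _ => hf0 _) i
  have hr : (0 : ℝ) < (i : ℝ) + 1 := by positivity
  have hH : (0 : ℝ) < ∑ j : Fin n, 1 / ((j : ℝ) + 1) :=
    sum_pos (fun j _ => by positivity) ⟨i, mem_univ i⟩
  exact ⟨hp, by field_simp, div_one_div_mul_le_of_le_one_div hr hH hp⟩

/-- with `q_i = 1/(i·H_n)` (index `i : Fin n` has rank `i+1`),
weighted sampling by `q` is a universal emulator with overhead at most `H_n`:
for every monotone nondecreasing nonnegative `f` the pps probability of the key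
of rank `i` is at most `1/i = H_n · q_i`, so `p_i / q_i ≤ H_n`. -/
theorem stmt_10 {n : ℕ} (hn : 0 < n) (w : Fin n → ℝ)
    (hpos : ∀ i, 0 < w i) (hmono : ∀ i j : Fin n, i ≤ j → w j ≤ w i)
    (f : ℝ → ℝ) (hf : Monotone f) (hf0 : ∀ t, 0 ≤ f t)
    (hfpos : 0 < ∑ j, f (w j)) :
    ∀ i : Fin n,
      f (w i) / (∑ j, f (w j)) ≤ 1 / ((i : ℝ) + 1) ∧
      1 / ((i : ℝ) + 1) =
        (∑ j : Fin n, 1 / ((j : ℝ) + 1)) *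
          (1 / (((i : ℝ) + 1) * ∑ j : Fin n, 1 / ((j : ℝ) + 1))) ∧
      (f (w i) / (∑ j, f (w j))) /
          (1 / (((i : ℝ) + 1) * ∑ j : Fin n, 1 / ((j : ℝ) + 1)))
        ≤ ∑ j : Fin n, 1 / ((j : ℝ) + 1) :=
  stmt_10_general w hmono f hf hf0
end

section
/- Let w : Fin n → ℝ be a frequency vector with w_1 ≥ w_2 ≥ ... ≥ w_n > 0, and let q : Fin n → ℝ with q_i > 0 for all i. Then for every monotone nondecreasing nonnegative function f : ℝ → ℝ with Σ_{j=1}^n f(w_j) > 0: max_{1≤i≤n} f(w_i) / ((Σ_{j=1}^n f(w_j)) · q_i) ≤ max_{1≤i≤n} 1/(i · q_i). That is, the universal emulation overhead of q is at most max_i 1/(i·q_i). -/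
/-! Since `w` is sorted and `f` monotone, `f (w i)` is the least of the `i + 1` values
`f (w 0), …, f (w i)`, so `(i + 1) f (w i) ≤ ∑ j, f (w j)`; dividing by the sum and by `q i`
bounds each term of the left maximum by the matching term of the right one. -/

open Finset

theorem Fin.succ_nsmul_le_sum_of_antitone {M : Type*} [AddCommMonoid M] [PartialOrder M]
    [IsOrderedAddMonoid M] {n : ℕ} {g : Fin n → M} (hg : Antitone g) (hg0 : ∀ j, 0 ≤ g j)
    (i : Fin n) : ((i : ℕ) + 1) • g i ≤ ∑ j, g j :=
  calc ((i : ℕ) + 1) • g i = ∑ _j ∈ Iic i, g i := by rw [Finset.sum_const, Fin.card_Iic]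
    _ ≤ ∑ j ∈ Iic i, g j := sum_le_sum fun j hj => hg (mem_Iic.mp hj)
    _ ≤ ∑ j, g j := sum_le_sum_of_subset_of_nonneg (subset_univ _) fun j _ _ => hg0 j

theorem div_mul_le_one_div_mul {a c s q : ℝ} (hc : 0 < c) (hs : 0 < s) (hq : 0 < q)
    (h : c * a ≤ s) : a / (s * q) ≤ 1 / (c * q) := by
  rw [div_le_div_iff₀ (mul_pos hs hq) (mul_pos hc hq)]
  nlinarith

theorem stmt_11_general {n : ℕ} (hn : 0 < n) (w : Fin n → ℝ)
    (hmono : ∀ i j : Fin n, i ≤ j → w j ≤ w i)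
    (q : Fin n → ℝ) (hq : ∀ i, 0 < q i)
    (f : ℝ → ℝ) (hf : Monotone f) (hf0 : ∀ t, 0 ≤ f t)
    (hfpos : 0 < ∑ j, f (w j)) :
    (univ.sup' ⟨⟨0, hn⟩, mem_univ _⟩ fun i : Fin n =>
        f (w i) / ((∑ j, f (w j)) * q i))
      ≤ univ.sup' ⟨⟨0, hn⟩, mem_univ _⟩ fun i : Fin n =>
        1 / (((i : ℝ) + 1) * q i) := by
  refine sup'_le _ _ fun i _ => le_trans ?_ (le_sup' _ (mem_univ i))
  have hfw : Antitone (f ∘ w) := hf.comp_antitone fun i j hij => hmono i j hij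
  have key := Fin.succ_nsmul_le_sum_of_antitone hfw (fun j => hf0 (w j)) i
  rw [nsmul_eq_mul] at key
  push_cast at key
  exact div_mul_le_one_div_mul (by positivity) hfpos (hq i) key

/-- for any positive probabilities `q`, the universal emulation
overhead on a nonincreasing positive frequency vector is at most
`max_i 1/(i·q_i)`: for every monotone nondecreasing nonnegative `f`,
`max_i f(w_i)/((∑_j f(w_j))·q_i) ≤ max_i 1/(i·q_i)`. -/
theorem stmt_11 {n : ℕ} (hn : 0 < n) (w : Fin n → ℝ)
    (hpos : ∀ i, 0 < w i) (hmono : ∀ i j : Fin n, i ≤ j → w j ≤ w i)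
    (q : Fin n → ℝ) (hq : ∀ i, 0 < q i)
    (f : ℝ → ℝ) (hf : Monotone f) (hf0 : ∀ t, 0 ≤ f t)
    (hfpos : 0 < ∑ j, f (w j)) :
    (univ.sup' ⟨⟨0, hn⟩, mem_univ _⟩ fun i : Fin n =>
        f (w i) / ((∑ j, f (w j)) * q i))
      ≤ univ.sup' ⟨⟨0, hn⟩, mem_univ _⟩ fun i : Fin n =>
        1 / (((i : ℝ) + 1) * q i) :=
  stmt_11_general hn w hmono q hq f hf hf0 hfpos
end

section
/- Let q : Fin n → ℝ be a probability vector: q_i > 0 for all i and Σ_{i=1}^n q_i = 1. Then max_{1≤i≤n} 1/(i · q_i) ≥ H_n, where H_n = Σ_{i=1}^n 1/i. Consequently, the universal emulation overhead of any sampling probability vector is at least H_n. -/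
/-! The `q`-weighted mean of the values `1 / (i q_i)` is `∑ q_i / (i q_i) = H_n`, and a maximum
dominates every weighted mean. -/

open Finset

theorem Finset.sum_le_mul_sum_of_div_le {ι 𝕜 : Type*} [Field 𝕜] [LinearOrder 𝕜]
    [IsStrictOrderedRing 𝕜] {s : Finset ι} {a q : ι → 𝕜} {M : 𝕜}
    (hq : ∀ i ∈ s, 0 < q i) (h : ∀ i ∈ s, a i / q i ≤ M) :
    ∑ i ∈ s, a i ≤ M * ∑ i ∈ s, q i := by
  rw [mul_sum]
  exact sum_le_sum fun i hi => (div_le_iff₀ (hq i hi)).1 (h i hi)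

/-- for any probability vector `q` on `n` ranked keys, the universal
emulation overhead `max_i 1/(i·q_i)` is at least the harmonic number `H_n`. -/
theorem stmt_12 {n : ℕ} (hn : 0 < n) (q : Fin n → ℝ)
    (hq : ∀ i, 0 < q i) (hsum : ∑ i, q i = 1) :
    (∑ i : Fin n, 1 / ((i : ℝ) + 1)) ≤
      univ.sup' ⟨⟨0, hn⟩, mem_univ _⟩ fun i : Fin n =>
        1 / (((i : ℝ) + 1) * q i) := by
  set M := univ.sup' ⟨⟨0, hn⟩, mem_univ _⟩ fun i : Fin n => 1 / (((i : ℝ) + 1) * q i)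
  calc ∑ i : Fin n, 1 / ((i : ℝ) + 1)
      ≤ M * ∑ i, q i := sum_le_mul_sum_of_div_le (fun i _ => hq i) fun i hi => by
        rw [div_div]
        exact le_sup' (fun i : Fin n => 1 / (((i : ℝ) + 1) * q i)) hi
    _ = M := by rw [hsum, mul_one]
end

section
/- Let w : Fin n → ℝ be strictly decreasing with w_1 > w_2 > ... > w_n > 0, and let q : Fin n → ℝ with q_i > 0 for all i. Then the universal estimation overhead satisfies: sup over all monotone nondecreasing nonnegative f : ℝ → ℝ with Σ_{j=1}^n f(w_j) > 0 of Σ_{i=1}^n (f(w_i)/Σ_{j=1}^n f(w_j))² / q_i equals max_{1≤i≤n} (1/i²) · Σ_{j=1}^i 1/q_j. -/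
/-!
For a threshold function `1_{t ≥ w_k}` the pps probabilities are `1/(k+1)` on the first `k+1`
frequencies, so it realises the `k`-th term of the maximum `M`. Conversely, for monotone `f` the
probabilities `p_i` are nonincreasing, and summation by parts against the partial sums
`B_i = ∑_{j ≤ i} 1/q_j ≤ M (i+1)²` gives
`∑ p_i²/q_i = ∑ B_i (p_i² - p_{i+1}²) ≤ M ∑ (i+1)² (p_i² - p_{i+1}²) = M ∑ (2i+1) p_i² ≤ M (∑ p_i)² = M`.
-/

open Finset

section SummationByParts

variable {R : Type*} [CommRing R]

theorem sum_mul_eq_sum_partialSum_mul_sub (a b : ℕ → R) (m : ℕ) :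
    ∑ i ∈ range m, a i * b i =
      ∑ i ∈ range m, (∑ j ∈ range (i + 1), b j) * (a i - a (i + 1)) +
        (∑ j ∈ range m, b j) * a m := by
  induction m with
  | zero => simp
  | succ m ih =>
    rw [sum_range_succ, ih, sum_range_succ _ m, sum_range_succ b m]
    ring

end SummationByParts

theorem sum_range_two_mul_add_one (m : ℕ) : ∑ i ∈ range m, (2 * (i : ℝ) + 1) = (m : ℝ) ^ 2 := by
  induction m with
  | zero => simp
  | succ m ih => rw [sum_range_succ, ih]; push_cast; ring

section AntitoneSequences

variable {u : ℕ → ℝ}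

theorem sum_two_mul_add_one_mul_sq_le_sq_sum (hu : Antitone u) (hu0 : ∀ i, 0 ≤ u i) (m : ℕ) :
    ∑ i ∈ range m, u i ^ 2 * (2 * (i : ℝ) + 1) ≤ (∑ i ∈ range m, u i) ^ 2 := by
  induction m with
  | zero => simp
  | succ m ih =>
    have hm : (m : ℝ) * u m ≤ ∑ i ∈ range m, u i := by
      simpa using sum_le_sum fun i hi => hu (mem_range.mp hi).le
    rw [sum_range_succ, sum_range_succ]
    nlinarith [hu0 m, mul_le_mul_of_nonneg_right hm (hu0 m)]

theorem sum_sq_mul_le_mul_sq_sum (b : ℕ → ℝ) {m : ℕ} {M : ℝ} (hu : Antitone u)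
    (hu0 : ∀ i, 0 ≤ u i) (hum : u m = 0) (hM : 0 ≤ M)
    (hb : ∀ i < m, ∑ j ∈ range (i + 1), b j ≤ M * ((i : ℝ) + 1) ^ 2) :
    ∑ i ∈ range m, u i ^ 2 * b i ≤ M * (∑ i ∈ range m, u i) ^ 2 := by
  have hdrop : ∀ i, 0 ≤ u i ^ 2 - u (i + 1) ^ 2 := fun i => by
    nlinarith [hu0 (i + 1), hu (Nat.le_succ i)]
  calc ∑ i ∈ range m, u i ^ 2 * b i
      = ∑ i ∈ range m, (∑ j ∈ range (i + 1), b j) * (u i ^ 2 - u (i + 1) ^ 2) := by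
        simp [sum_mul_eq_sum_partialSum_mul_sub (fun i => u i ^ 2) b, hum]
    _ ≤ ∑ i ∈ range m, M * ((i : ℝ) + 1) ^ 2 * (u i ^ 2 - u (i + 1) ^ 2) :=
        sum_le_sum fun i hi => mul_le_mul_of_nonneg_right (hb i (mem_range.mp hi)) (hdrop i)
    _ = M * ∑ i ∈ range m, u i ^ 2 * (2 * (i : ℝ) + 1) := by
        simp [sum_mul_eq_sum_partialSum_mul_sub (fun i => u i ^ 2), hum,
          sum_range_two_mul_add_one, mul_sum, mul_assoc]
    _ ≤ M * (∑ i ∈ range m, u i) ^ 2 :=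
        mul_le_mul_of_nonneg_left (sum_two_mul_add_one_mul_sq_le_sq_sum hu hu0 m) hM

end AntitoneSequences

section ZeroExtension

variable {n : ℕ}

def zeroExtend (g : Fin n → ℝ) (i : ℕ) : ℝ := if h : i < n then g ⟨i, h⟩ else 0

@[simp]
theorem zeroExtend_val (g : Fin n → ℝ) (i : Fin n) : zeroExtend g i = g i := by
  simp [zeroExtend]

theorem zeroExtend_of_le (g : Fin n → ℝ) {i : ℕ} (hi : n ≤ i) : zeroExtend g i = 0 := by
  simp [zeroExtend, hi]

theorem zeroExtend_nonneg {g : Fin n → ℝ} (hg0 : ∀ i, 0 ≤ g i) (i : ℕ) : 0 ≤ zeroExtend g i := by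
  unfold zeroExtend; split_ifs <;> simp [hg0]

theorem antitone_zeroExtend {g : Fin n → ℝ} (hg : Antitone g) (hg0 : ∀ i, 0 ≤ g i) :
    Antitone (zeroExtend g) := by
  intro i j hij
  by_cases hj : j < n
  · have hi : i < n := hij.trans_lt hj
    simpa [zeroExtend, hi, hj] using hg (Fin.mk_le_mk.mpr hij)
  · simpa [zeroExtend_of_le g (not_lt.mp hj)] using zeroExtend_nonneg hg0 i

theorem sum_Iic_eq_sum_range_zeroExtend (g : Fin n → ℝ) (i : Fin n) :
    ∑ j ∈ Iic i, g j = ∑ j ∈ range (i + 1), zeroExtend g j := by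
  rw [Nat.range_succ_eq_Iic, ← Fin.map_valEmbedding_Iic, sum_map]
  simp

end ZeroExtension

theorem sum_sq_div_le_of_antitone {n : ℕ} {p q : Fin n → ℝ} {M : ℝ} (hp : Antitone p)
    (hp0 : ∀ i, 0 ≤ p i) (hp1 : ∑ i, p i = 1) (hM : 0 ≤ M)
    (hq : ∀ i, ∑ j ∈ Iic i, 1 / q j ≤ M * ((i : ℝ) + 1) ^ 2) :
    ∑ i, p i ^ 2 / q i ≤ M := by
  have key := sum_sq_mul_le_mul_sq_sum (zeroExtend fun j => 1 / q j)
    (antitone_zeroExtend hp hp0) (zeroExtend_nonneg hp0) (zeroExtend_of_le p le_rfl) hM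
    fun i hi => (sum_Iic_eq_sum_range_zeroExtend _ ⟨i, hi⟩).symm.trans_le (hq ⟨i, hi⟩)
  simpa [← Fin.sum_univ_eq_sum_range, hp1, div_eq_mul_inv] using key

noncomputable def threshold (c t : ℝ) : ℝ := if c ≤ t then 1 else 0

theorem monotone_threshold (c : ℝ) : Monotone (threshold c) := by
  intro a b hab
  unfold threshold
  split_ifs with ha hb <;> first | exact absurd (ha.trans hab) hb | norm_num

theorem threshold_nonneg (c t : ℝ) : 0 ≤ threshold c t := by
  unfold threshold; split_ifs <;> norm_num

section StrictAnti

variable {n : ℕ} {w : Fin n → ℝ}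

theorem threshold_apply_of_strictAnti (hw : StrictAnti w) (k j : Fin n) :
    threshold (w k) (w j) = if j ≤ k then 1 else 0 := by
  simp [threshold, hw.le_iff_ge]

theorem sum_threshold_of_strictAnti (hw : StrictAnti w) (k : Fin n) :
    ∑ j, threshold (w k) (w j) = (k : ℝ) + 1 := by
  simp [threshold_apply_of_strictAnti hw, filter_ge_eq_Iic]

theorem sum_sq_div_threshold_of_strictAnti (hw : StrictAnti w) (q : Fin n → ℝ) (k : Fin n) :
    ∑ i, (threshold (w k) (w i) / ∑ j, threshold (w k) (w j)) ^ 2 / q i =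
      1 / ((k : ℝ) + 1) ^ 2 * ∑ j ∈ Iic k, 1 / q j := by
  rw [sum_threshold_of_strictAnti hw, mul_sum, ← filter_ge_eq_Iic, sum_filter]
  refine sum_congr rfl fun j _ => ?_
  rw [threshold_apply_of_strictAnti hw]
  split_ifs <;> simp [div_eq_mul_inv]

end StrictAnti

theorem stmt_14_general {n : ℕ} (hn : 0 < n) (w : Fin n → ℝ)
    (hstrict : ∀ i j : Fin n, i < j → w j < w i)
    (q : Fin n → ℝ) (hq : ∀ i, 0 < q i) :
    sSup {M : ℝ | ∃ f : ℝ → ℝ, Monotone f ∧ (∀ t, 0 ≤ f t) ∧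
          0 < ∑ j, f (w j) ∧
          M = ∑ i, (f (w i) / ∑ j, f (w j)) ^ 2 / q i}
      = univ.sup' ⟨⟨0, hn⟩, mem_univ _⟩ fun i : Fin n =>
          (1 / ((i : ℝ) + 1) ^ 2) * ∑ j ∈ Finset.Iic i, 1 / q j := by
  have hw : StrictAnti w := hstrict
  set F : Fin n → ℝ := fun i => 1 / ((i : ℝ) + 1) ^ 2 * ∑ j ∈ Iic i, 1 / q j
  have hF0 : ∀ i, 0 ≤ F i := fun i =>
    mul_nonneg (by positivity) (sum_nonneg fun j _ => (one_div_pos.mpr (hq j)).le)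
  refine IsGreatest.csSup_eq ⟨?_, ?_⟩
  · obtain ⟨k, -, hk⟩ := exists_mem_eq_sup' ⟨⟨0, hn⟩, mem_univ _⟩ F
    refine ⟨threshold (w k), monotone_threshold _, threshold_nonneg _, ?_, ?_⟩
    · rw [sum_threshold_of_strictAnti hw]
      positivity
    · rw [hk, sum_sq_div_threshold_of_strictAnti hw]
  · rintro _ ⟨f, hf, hf0, hS, rfl⟩
    refine sum_sq_div_le_of_antitone (fun i j hij => ?_) (fun i => ?_) ?_
      (le_sup'_of_le F (mem_univ ⟨0, hn⟩) (hF0 _)) fun i => ?_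
    · exact div_le_div_of_nonneg_right (hf (hw.antitone hij)) hS.le
    · exact div_nonneg (hf0 _) hS.le
    · rw [← sum_div, div_self hS.ne']
    · rw [← div_le_iff₀ (by positivity), ← one_div_mul_eq_div]
      exact le_sup' F (mem_univ i)

/-- for strictly decreasing positive frequencies and positive
sampling probabilities `q`, the universal estimation overhead
`sup_f ∑_i (f(w_i)/∑_j f(w_j))²/q_i` (over monotone nondecreasing nonnegative `f`
with positive total) equals `max_i (1/i²)·∑_{j=1}^i 1/q_j`. -/
theorem stmt_14 {n : ℕ} (hn : 0 < n) (w : Fin n → ℝ)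
    (hpos : ∀ i, 0 < w i) (hstrict : ∀ i j : Fin n, i < j → w j < w i)
    (q : Fin n → ℝ) (hq : ∀ i, 0 < q i) :
    sSup {M : ℝ | ∃ f : ℝ → ℝ, Monotone f ∧ (∀ t, 0 ≤ f t) ∧
          0 < ∑ j, f (w j) ∧
          M = ∑ i, (f (w i) / ∑ j, f (w j)) ^ 2 / q i}
      = univ.sup' ⟨⟨0, hn⟩, mem_univ _⟩ fun i : Fin n =>
          (1 / ((i : ℝ) + 1) ^ 2) * ∑ j ∈ Finset.Iic i, 1 / q j :=
  stmt_14_general hn w hstrict q hq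
end

section
/- Let w : Fin n → ℝ be a frequency vector with w_1 ≥ w_2 ≥ ... ≥ w_n > 0 and let c > 0 be such that for all i ∈ {1,...,n}, i · w_i ≥ c · Σ_{j=i+1}^n w_j. Define q'_i = w_i / (i·w_i + Σ_{j=i+1}^n w_j) and the pps probabilities q_i = q'_i / Σ_{k=1}^n q'_k. Then for every i: q'_i ≥ 1/(i·(1+1/c)) and Σ_{k=1}^n q'_k ≤ H_n, and consequently the universal emulation overhead satisfies max_{1≤i≤n} 1/(i·q_i) ≤ (1 + 1/c) · H_n. -/
open Finset

/-- The base pps weights of the multi-objective concave-sublinear sample: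
`q'_i = w_i / (i·w_i + ∑_{j>i} w_j)` (index `i : Fin n` has rank `i+1`). -/
noncomputable def qPrime {n : ℕ} (w : Fin n → ℝ) (i : Fin n) : ℝ :=
  w i / (((i : ℝ) + 1) * w i + ∑ j ∈ Finset.Ioi i, w j)

/-
Each weight satisfies `q'_i ≤ 1/i`, since the tail sum in its denominator is nonnegative; summing
gives `∑ q'_k ≤ H_n`. The hypothesis `c ∑_{j>i} w_j ≤ i w_i` bounds that denominator by
`i w_i (1 + 1/c)`, so `i q'_i ≥ 1/(1 + 1/c)`. Hence `1/(i q_i) = ∑ q'_k / (i q'_i) ≤ (1 + 1/c) H_n`.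
-/

theorem one_div_mul_div_le_mul {r q Q H C : ℝ} (hr : 0 < r) (hC : 0 < C) (hQ : 0 < Q)
    (hQH : Q ≤ H) (hq : 1 / (r * C) ≤ q) : 1 / (r * (q / Q)) ≤ C * H := by
  have hq_pos : 0 < q := lt_of_lt_of_le (by positivity) hq
  have hrq : 1 ≤ C * (r * q) := by
    rw [div_le_iff₀ (by positivity)] at hq
    linarith
  calc 1 / (r * (q / Q)) = Q / (r * q) := by field_simp
    _ ≤ C * Q := by rw [div_le_iff₀ (by positivity)]; nlinarith
    _ ≤ C * H := by gcongr

section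

variable {n : ℕ} {w : Fin n → ℝ}

theorem sum_Ioi_nonneg (hw : ∀ j, 0 ≤ w j) (i : Fin n) : 0 ≤ ∑ j ∈ Ioi i, w j :=
  sum_nonneg fun j _ => hw j

theorem qPrime_pos (hw : ∀ j, 0 < w j) (i : Fin n) : 0 < qPrime w i :=
  div_pos (hw i) <| add_pos_of_pos_of_nonneg (mul_pos (by positivity) (hw i))
    (sum_Ioi_nonneg (fun j => (hw j).le) i)

theorem qPrime_le_one_div_rank (hw : ∀ j, 0 ≤ w j) (i : Fin n) :
    qPrime w i ≤ 1 / ((i : ℝ) + 1) := by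
  rcases (hw i).eq_or_lt with hi | hi
  · rw [qPrime, ← hi, zero_div]
    positivity
  calc qPrime w i ≤ w i / (((i : ℝ) + 1) * w i) :=
        div_le_div_of_nonneg_left (hw i) (by positivity)
          (le_add_of_nonneg_right (sum_Ioi_nonneg hw i))
    _ = 1 / ((i : ℝ) + 1) := by field_simp

theorem sum_qPrime_le_harmonic (hw : ∀ j, 0 ≤ w j) :
    ∑ k, qPrime w k ≤ ∑ i : Fin n, 1 / ((i : ℝ) + 1) :=
  sum_le_sum fun i _ => qPrime_le_one_div_rank hw i

theorem one_div_rank_mul_le_qPrime (hw : ∀ j, 0 ≤ w j) {i : Fin n} (hi : 0 < w i) {c : ℝ}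
    (hc : 0 < c) (hcond : c * ∑ j ∈ Ioi i, w j ≤ ((i : ℝ) + 1) * w i) :
    1 / (((i : ℝ) + 1) * (1 + 1 / c)) ≤ qPrime w i := by
  have hdenom : ((i : ℝ) + 1) * w i + ∑ j ∈ Ioi i, w j ≤ ((i : ℝ) + 1) * w i * (1 + 1 / c) := by
    have htail : ∑ j ∈ Ioi i, w j ≤ ((i : ℝ) + 1) * w i / c := by
      rw [le_div_iff₀ hc]; linarith
    linarith [mul_one_add (((i : ℝ) + 1) * w i) (1 / c), mul_one_div (((i : ℝ) + 1) * w i) c]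
  calc 1 / (((i : ℝ) + 1) * (1 + 1 / c)) = w i / (((i : ℝ) + 1) * w i * (1 + 1 / c)) := by
        field_simp
    _ ≤ qPrime w i :=
        div_le_div_of_nonneg_left hi.le
          (add_pos_of_pos_of_nonneg (mul_pos (by positivity) hi) (sum_Ioi_nonneg hw i)) hdenom

end

theorem stmt_16_general {n : ℕ} (hn : 0 < n) (w : Fin n → ℝ)
    (hpos : ∀ i, 0 < w i)
    (c : ℝ) (hc : 0 < c)
    (hcond : ∀ i : Fin n, c * ∑ j ∈ Finset.Ioi i, w j ≤ ((i : ℝ) + 1) * w i) :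
    (∀ i : Fin n, 1 / (((i : ℝ) + 1) * (1 + 1 / c)) ≤ qPrime w i) ∧
    (∑ k, qPrime w k) ≤ (∑ i : Fin n, 1 / ((i : ℝ) + 1)) ∧
    (univ.sup' ⟨⟨0, hn⟩, mem_univ _⟩ fun i : Fin n =>
        1 / (((i : ℝ) + 1) * (qPrime w i / ∑ k, qPrime w k)))
      ≤ (1 + 1 / c) * ∑ j : Fin n, 1 / ((j : ℝ) + 1) := by
  have hw : ∀ j, 0 ≤ w j := fun j => (hpos j).le
  have hlower i := one_div_rank_mul_le_qPrime hw (hpos i) hc (hcond i)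
  refine ⟨hlower, sum_qPrime_le_harmonic hw, sup'_le _ _ fun i _ => ?_⟩
  have hsum_pos : 0 < ∑ k, qPrime w k := sum_pos (fun k _ => qPrime_pos hpos k) ⟨i, mem_univ _⟩
  exact one_div_mul_div_le_mul (by positivity) (by positivity) hsum_pos
    (sum_qPrime_le_harmonic hw) (hlower i)

/-- if `i·w_i ≥ c·∑_{j>i} w_j` for all `i`, then `q'_i ≥ 1/(i(1+1/c))`,
`∑_k q'_k ≤ H_n`, and the universal emulation overhead of the normalized
probabilities `q_i = q'_i/∑_k q'_k` satisfies `max_i 1/(i·q_i) ≤ (1+1/c)·H_n`. -/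
theorem stmt_16 {n : ℕ} (hn : 0 < n) (w : Fin n → ℝ)
    (hpos : ∀ i, 0 < w i) (hmono : ∀ i j : Fin n, i ≤ j → w j ≤ w i)
    (c : ℝ) (hc : 0 < c)
    (hcond : ∀ i : Fin n, c * ∑ j ∈ Finset.Ioi i, w j ≤ ((i : ℝ) + 1) * w i) :
    (∀ i : Fin n, 1 / (((i : ℝ) + 1) * (1 + 1 / c)) ≤ qPrime w i) ∧
    (∑ k, qPrime w k) ≤ (∑ i : Fin n, 1 / ((i : ℝ) + 1)) ∧
    (univ.sup' ⟨⟨0, hn⟩, mem_univ _⟩ fun i : Fin n =>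
        1 / (((i : ℝ) + 1) * (qPrime w i / ∑ k, qPrime w k)))
      ≤ (1 + 1 / c) * ∑ j : Fin n, 1 / ((j : ℝ) + 1) :=
  stmt_16_general hn w hpos c hc hcond
end

section
/- Let n be a positive integer, let F > 0 and S_w > 0 with F ≤ S_w (the f-value of a key and the total f-statistics), let A > 0 and S_a > 0 with A ≤ S_a (the f-value of the key's advice and the total advised f-statistics), and let c_p, c_u > 0 and k ≥ 1 be reals. Suppose F/S_w ≤ max{ c_p · A/S_a , c_u/n }, and let k_u, k_p be reals with k_u − 2 ≥ k·c_u and k_p − 2 ≥ k·c_p. Then min{ n·F² / (k_u − 2) , S_a·F² / ((k_p − 2)·A) } ≤ F·S_w / k. (The left-hand side is the minimum of the variance bounds of a uniform sample of size k_u and a weighted-by-advice sample of size k_p, and the right-hand side is the benchmark pps variance bound with sample size k.) -/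
/-!
Both bounds of the sketch have the shape `m·F²/K`: `m = n` for the uniform sample and
`m = S_a/A` for the sample by advice. If the key's share `F/S_w` of the statistics is at
most `c/m` and `K ≥ k·c`, then `m·F²/K ≤ (m·F)·F/(k·c) ≤ (c·S_w)·F/(k·c) = F·S_w/k`.
The hypothesis on `max` says that one of the two samples meets this condition.
-/

theorem mul_sq_div_le_of_div_le_div {m c k K F S : ℝ} (hm : 0 < m) (hc : 0 < c) (hk : 0 < k)
    (hF : 0 ≤ F) (hS : 0 < S) (hshare : F / S ≤ c / m) (hK : k * c ≤ K) :
    m * F ^ 2 / K ≤ F * S / k := by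
  have hkc : 0 < k * c := mul_pos hk hc
  have hmF : m * F ≤ c * S := by
    rw [div_le_div_iff₀ hS hm] at hshare
    linarith
  calc m * F ^ 2 / K ≤ m * F ^ 2 / (k * c) := by gcongr
    _ = m * F * F / (k * c) := by ring
    _ ≤ c * S * F / (k * c) := by gcongr
    _ = F * S / k := by field_simp

theorem stmt_18_general (n : ℕ) (hn : 0 < n) (F Sw A Sa : ℝ)
    (hF : 0 < F) (hSw : 0 < Sw)
    (hA : 0 < A) (hSa : 0 < Sa)
    (cp cu k : ℝ) (hcp : 0 < cp) (hcu : 0 < cu) (hk : 1 ≤ k)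
    (hmax : F / Sw ≤ max (cp * (A / Sa)) (cu / n))
    (ku kp : ℝ) (hku : k * cu ≤ ku - 2) (hkp : k * cp ≤ kp - 2) :
    min ((n : ℝ) * F ^ 2 / (ku - 2)) (Sa * F ^ 2 / ((kp - 2) * A))
      ≤ F * Sw / k := by
  have hk0 : 0 < k := zero_lt_one.trans_le hk
  rcases le_max_iff.mp hmax with hadvice | huniform
  · have hshare : F / Sw ≤ cp / (Sa / A) := by rwa [div_div_eq_mul_div, mul_div_assoc]
    have hbound := mul_sq_div_le_of_div_le_div (div_pos hSa hA) hcp hk0 hF.le hSw hshare hkp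
    calc _ ≤ Sa * F ^ 2 / ((kp - 2) * A) := min_le_right _ _
      _ = Sa / A * F ^ 2 / (kp - 2) := by field_simp
      _ ≤ F * Sw / k := hbound
  · exact (min_le_left _ _).trans <|
      mul_sq_div_le_of_div_le_div (Nat.cast_pos.mpr hn) hcu hk0 hF.le hSw huniform hku

/-- the per-key variance bound of the sample-by-advice sketch (the
minimum of the uniform-sample bound with `k_u` keys and the by-advice bound with
`k_p` keys) is at most the benchmark pps variance bound `F·S_w/k`, provided
`F/S_w ≤ max(c_p·A/S_a, c_u/n)`, `k_u - 2 ≥ k·c_u` and `k_p - 2 ≥ k·c_p`. -/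
theorem stmt_18 (n : ℕ) (hn : 0 < n) (F Sw A Sa : ℝ)
    (hF : 0 < F) (hSw : 0 < Sw) (hFSw : F ≤ Sw)
    (hA : 0 < A) (hSa : 0 < Sa) (hASa : A ≤ Sa)
    (cp cu k : ℝ) (hcp : 0 < cp) (hcu : 0 < cu) (hk : 1 ≤ k)
    (hmax : F / Sw ≤ max (cp * (A / Sa)) (cu / n))
    (ku kp : ℝ) (hku : k * cu ≤ ku - 2) (hkp : k * cp ≤ kp - 2) :
    min ((n : ℝ) * F ^ 2 / (ku - 2)) (Sa * F ^ 2 / ((kp - 2) * A))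
      ≤ F * Sw / k :=
  stmt_18_general n hn F Sw A Sa hF hSw hA hSa cp cu k hcp hcu hk hmax ku kp hku hkp
end
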